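/- arXiv:1211.0709 — 2 statements merged into one kernel-verified Lean document; each statement's English description precedes it below -/
import Mathlib

section
/- For any finite simple undirected graph G on n ≥ 3 vertices, the quantity ∑_{i ∈ V} (d* − d_i), where d* is the maximum degree and d_i the degree of vertex i, satisfies ∑_i (d* − d_i) ≤ (n−1)(n−2). -/
/-! The deficits `Δ - d v` sum to `n Δ - 2 |E|`, and `|E| ≥ Δ` (count the edges at a vertex of
maximum degree), so the sum is at most `(n - 2) Δ ≤ (n - 2) (n - 1)`. -/

open Finset

namespace SimpleGraph

variable {V : Type*} [Fintype V] (G : SimpleGraph V) [DecidableRel G.Adj]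

lemma maxDegree_le_card_sub_one : G.maxDegree ≤ Fintype.card V - 1 :=
  G.maxDegree_le_of_forall_degree_le _ fun v ↦ Nat.le_sub_one_of_lt (G.degree_lt_card_verts v)

lemma maxDegree_le_card_edgeFinset [DecidableEq V] : G.maxDegree ≤ #G.edgeFinset :=
  G.maxDegree_le_of_forall_degree_le _ fun v ↦ G.degree_le_card_edgeFinset v

lemma sum_maxDegree_sub_degree_add_two_mul_card_edgeFinset [DecidableEq V] :
    ∑ v, (G.maxDegree - G.degree v) + 2 * #G.edgeFinset = Fintype.card V * G.maxDegree := by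
  rw [← G.sum_degrees_eq_twice_card_edges, ← sum_add_distrib]
  simp [Nat.sub_add_cancel (G.degree_le_maxDegree _)]

lemma sum_maxDegree_sub_degree_le_mul :
    ∑ v, (G.maxDegree - G.degree v) ≤ (Fintype.card V - 2) * G.maxDegree := by
  classical
  have h_sum := G.sum_maxDegree_sub_degree_add_two_mul_card_edgeFinset
  have h_edges := G.maxDegree_le_card_edgeFinset
  rw [Nat.sub_mul]
  omega

end SimpleGraph

theorem sum_maxDegree_sub_degree_le_general {V : Type*} [Fintype V] (G : SimpleGraph V)
    [DecidableRel G.Adj] :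
    ∑ v, (G.maxDegree - G.degree v) ≤ (Fintype.card V - 1) * (Fintype.card V - 2) :=
  calc ∑ v, (G.maxDegree - G.degree v)
      _ ≤ (Fintype.card V - 2) * G.maxDegree := G.sum_maxDegree_sub_degree_le_mul
      _ ≤ (Fintype.card V - 2) * (Fintype.card V - 1) :=
        Nat.mul_le_mul_left _ G.maxDegree_le_card_sub_one
      _ = (Fintype.card V - 1) * (Fintype.card V - 2) := Nat.mul_comm _ _

theorem sum_maxDegree_sub_degree_le {V : Type*} [Fintype V] (G : SimpleGraph V)
    [DecidableRel G.Adj] (hn : 3 ≤ Fintype.card V) :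
    ∑ v, (G.maxDegree - G.degree v) ≤ (Fintype.card V - 1) * (Fintype.card V - 2) :=
  sum_maxDegree_sub_degree_le_general G
end

section
/- The function fragile_G(V') = C_{G(V−V')} (network-wide degree centrality of the subgraph induced on V − V') is not monotone: there exists a finite simple graph G with vertices u, v such that fragile_G({u}) > fragile_G(∅) and fragile_G({v}) < fragile_G(∅). -/
/-! In the star `K_{1,5}` with centre `0` and one chord `1 — 2` between leaves, `C = 9/10`.
Deleting the chord endpoint `1` leaves the star `K_{1,4}`, which has `C = 1`; deleting the
plain leaf `3` keeps the chord and gives `C = 5/6`. -/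

open Finset

open scoped Classical in
noncomputable def centrality {V : Type*} [Fintype V] (G : SimpleGraph V) : ℚ :=
  (∑ v, ((G.maxDegree : ℚ) - (G.degree v : ℚ))) /
    (((Fintype.card V : ℚ) - 1) * ((Fintype.card V : ℚ) - 2))

open scoped Classical in
noncomputable def fragile {V : Type*} [Fintype V] (G : SimpleGraph V) (V' : Set V) : ℚ :=
  centrality (G.induce V'ᶜ)

namespace SimpleGraph

variable {V : Type*} [Fintype V]

theorem centrality_eq_of_card_maxDegree_edgeFinset [DecidableEq V] (G : SimpleGraph V)
    [DecidableRel G.Adj] {n Δ m : ℕ} (hn : Fintype.card V = n) (hΔ : G.maxDegree = Δ)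
    (hm : #G.edgeFinset = m) :
    centrality G = ((n : ℚ) * Δ - 2 * m) / (((n : ℚ) - 1) * ((n : ℚ) - 2)) := by
  subst hn hΔ hm
  have handshake := G.sum_degrees_eq_twice_card_edges
  unfold centrality
  rw [sum_sub_distrib, sum_const, card_univ, nsmul_eq_mul, ← Nat.cast_sum]
  congr!
  norm_cast
  convert handshake

theorem fragile_eq (G : SimpleGraph V) (V' : Set V) [DecidablePred (· ∈ V')] :
    fragile G V' = centrality (G.induce V'ᶜ) := by
  unfold fragile
  congr!

end SimpleGraph

open SimpleGraph

def starWithChord : SimpleGraph (Fin 6) :=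
  fromRel fun a b => a = 0 ∨ (a = 1 ∧ b = 2)

instance : DecidableRel starWithChord.Adj := fun a b =>
  decidable_of_iff' _ (fromRel_adj _ a b)

theorem fragile_starWithChord_empty : fragile starWithChord ∅ = 9 / 10 := by
  rw [fragile_eq, centrality_eq_of_card_maxDegree_edgeFinset (n := 6) (Δ := 5) (m := 6)
    _ (by decide) (by decide) (by decide)]
  norm_num

theorem fragile_starWithChord_chordEnd : fragile starWithChord {1} = 1 := by
  rw [fragile_eq, centrality_eq_of_card_maxDegree_edgeFinset (n := 5) (Δ := 4) (m := 4)
    _ (by decide) (by decide) (by decide)]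
  norm_num

theorem fragile_starWithChord_leaf : fragile starWithChord {3} = 5 / 6 := by
  rw [fragile_eq, centrality_eq_of_card_maxDegree_edgeFinset (n := 5) (Δ := 4) (m := 5)
    _ (by decide) (by decide) (by decide)]
  norm_num

theorem fragile_not_monotone :
    ∃ (n : ℕ) (G : SimpleGraph (Fin n)) (u v : Fin n),
      fragile G {u} > fragile G ∅ ∧ fragile G {v} < fragile G ∅ := by
  refine ⟨6, starWithChord, 1, 3, ?_, ?_⟩
  · rw [fragile_starWithChord_chordEnd, fragile_starWithChord_empty]
    norm_num
  · rw [fragile_starWithChord_leaf, fragile_starWithChord_empty]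
    norm_num
end
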